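/- Let I and J be filtrations of a Noetherian ring R and α ∈ ℝ_{>0}. Then ν̄_I = α·ν̄_J if and only if K(I^(α)) = K(J), where I^(α) is the twist of I by α and K denotes the saturation K(F)_m = {f : ν̄_F(f) ≥ m}. -/

import Mathlib

/-!
The superlevel sets `{f | m ≤ ν̄(f)}` for integer `m` determine `ν̄` because `ν̄` is homogeneous,
`ν̄(f^k) = k ν̄(f)`: knowing for all integers `m` and `k > 0` whether `m ≤ k ν̄(f)` pins down
`ν̄(f)`. Homogeneity holds because `n ↦ ν(f^n)` is superhomogeneous, which turns the limsup
defining `ν̄` into a supremum of `ν(f^n)/n`. The twist only rescales orders up to a bounded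
error, `α ν_{I^(α)} ≤ ν_I ≤ α (ν_{I^(α)} + 1)`, so `α ν̄_{I^(α)} = ν̄_I`, and the theorem becomes
`ν̄_{I^(α)} = ν̄_J ↔ K(I^(α)) = K(J)`.
-/

open Filter Topology Polynomial
open scoped ENNReal

/-- A filtration `I = {I_m}` of ideals of `R`: `I_0 = R`, `I_{n+1} ⊆ I_n`,
and `I_m · I_n ⊆ I_{m+n}`. -/
structure RingFiltration (R : Type*) [CommRing R] where
  I : ℕ → Ideal R
  top_eq : I 0 = ⊤
  antitone_succ : ∀ n, I (n + 1) ≤ I n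
  mul_le : ∀ m n, I m * I n ≤ I (m + n)

namespace RingFiltration
variable {R : Type*} [CommRing R] (F : RingFiltration R)

/-- The order function `ν_I(f) = sup {m : f ∈ I_m}`, viewed in `[0,∞]`. -/
noncomputable def nu (f : R) : ℝ≥0∞ :=
  sSup ((fun m : ℕ => (m : ℝ≥0∞)) '' {m | f ∈ F.I m})

/-- The asymptotic Samuel function `ν̄_I(f) = lim_n ν_I(f^n)/n` (the limit exists and
equals the limsup used here to define it). -/
noncomputable def nubar (f : R) : ℝ≥0∞ :=
  Filter.limsup (fun n : ℕ => F.nu (f ^ n) / (n : ℝ≥0∞)) Filter.atTop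

end RingFiltration

namespace ENNReal

theorem le_of_forall_natCast_le_mul {x y : ℝ≥0∞}
    (h : ∀ k m : ℕ, 0 < k → (m : ℝ≥0∞) ≤ k * x → (m : ℝ≥0∞) ≤ k * y) : x ≤ y := by
  by_contra! hyx
  -- With `y < r < s < x` and `k (s - r) > 1`, the integer `m = ⌊k s⌋` satisfies `k y < m ≤ k x`.
  obtain ⟨r, hyr, hrx⟩ := ENNReal.lt_iff_exists_nnreal_btwn.1 hyx
  obtain ⟨s, hrs, hsx⟩ := ENNReal.lt_iff_exists_nnreal_btwn.1 hrx
  have hrs' : (r : ℝ) < s := by exact_mod_cast ENNReal.coe_lt_coe.1 hrs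
  obtain ⟨k, hk⟩ := exists_nat_gt (1 / ((s : ℝ) - r))
  have hk0 : 0 < k := by
    have : (0 : ℝ) < k := lt_trans (by have := sub_pos.2 hrs'; positivity) hk
    exact_mod_cast this
  set m := ⌊(k : ℝ) * s⌋₊
  have hm_le : (m : ℝ≥0∞) ≤ k * x := by
    grw [← hsx.le]
    rw [← ENNReal.ofReal_natCast, ← ENNReal.ofReal_natCast k, ← ENNReal.ofReal_coe_nnreal,
      ← ENNReal.ofReal_mul (by positivity)]
    exact ENNReal.ofReal_le_ofReal (Nat.floor_le (by positivity))
  have hm_gt : (k : ℝ) * r < m := by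
    have h1 : (k : ℝ) * s - 1 < m := Nat.sub_one_lt_floor _
    have h2 : 1 < (k : ℝ) * (s - r) := by
      rw [div_lt_iff₀ (sub_pos.2 hrs')] at hk
      linarith
    nlinarith
  have : (m : ℝ≥0∞) ≤ k * r := by grw [h k m hk0 hm_le, hyr.le]
  rw [← ENNReal.ofReal_natCast, ← ENNReal.ofReal_natCast k, ← ENNReal.ofReal_coe_nnreal,
      ← ENNReal.ofReal_mul (by positivity), ENNReal.ofReal_le_ofReal_iff (by positivity)] at this
  linarith

end ENNReal

section Superhomogeneous

variable {a : ℕ → ℝ≥0∞}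

theorem div_le_div_of_superhomogeneous (ha : ∀ k n, k * a n ≤ a (k * n)) {k : ℕ} (hk : k ≠ 0)
    (n : ℕ) : a n / n ≤ a (k * n) / (k * n : ℕ) := by
  calc a n / n = k * a n / (k * n : ℕ) := by
        rw [Nat.cast_mul, ENNReal.mul_div_mul_left _ _ (by simpa) (by simp)]
    _ ≤ a (k * n) / (k * n : ℕ) := ENNReal.div_le_div_right (ha k n) _

-- The term `n = 0` is excluded because `a 0 / 0 = ⊤` unless `a 0 = 0`.
theorem limsup_div_eq_iSup_of_superhomogeneous (ha : ∀ k n, k * a n ≤ a (k * n)) :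
    limsup (fun n => a n / n) atTop = ⨆ n > 0, a n / n := by
  apply le_antisymm
  · refine limsup_le_of_le (by isBoundedDefault) ?_
    filter_upwards [eventually_gt_atTop 0] with n hn using le_iSup₂ (f := fun n _ => a n / n) n hn
  · refine iSup₂_le fun n hn => le_limsup_of_frequently_le' (frequently_atTop.2 fun N => ?_)
    exact ⟨(N + 1) * n, by nlinarith, div_le_div_of_superhomogeneous ha N.succ_ne_zero n⟩

theorem iSup_comp_mul_div_of_superhomogeneous (ha : ∀ k n, k * a n ≤ a (k * n)) {k : ℕ}
    (hk : k ≠ 0) : ⨆ n > 0, a (k * n) / n = k * ⨆ n > 0, a n / n := by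
  simp only [ENNReal.mul_iSup]
  apply le_antisymm
  · refine iSup₂_le fun n hn => le_iSup₂_of_le (k * n) (by positivity) ?_
    rw [← mul_div_assoc, Nat.cast_mul, ENNReal.mul_div_mul_left _ _ (by simpa) (by simp)]
  · refine iSup₂_mono fun n _ => ?_
    rw [← mul_div_assoc]
    exact ENNReal.div_le_div_right (ha k n) _

end Superhomogeneous

namespace RingFiltration

variable {R : Type*} [CommRing R] (F : RingFiltration R)

theorem antitone_I : Antitone F.I := antitone_nat_of_succ_le F.antitone_succ

theorem le_nu {f : R} {m : ℕ} (h : f ∈ F.I m) : (m : ℝ≥0∞) ≤ F.nu f :=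
  le_sSup ⟨m, h, rfl⟩

theorem pow_mem {f : R} {m : ℕ} (h : f ∈ F.I m) (k : ℕ) : f ^ k ∈ F.I (k * m) := by
  induction k with
  | zero => simp [F.top_eq]
  | succ k ih =>
    rw [pow_succ, add_mul, one_mul]
    exact F.mul_le _ _ (Ideal.mul_mem_mul ih h)

theorem mul_nu_le_nu_pow (f : R) (k : ℕ) : k * F.nu f ≤ F.nu (f ^ k) := by
  rw [nu, ENNReal.mul_sSup]
  refine iSup₂_le ?_
  rintro _ ⟨m, hm, rfl⟩
  simpa only [Nat.cast_mul] using F.le_nu (F.pow_mem hm k)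

theorem mul_nu_pow_le_nu_pow_mul (f : R) (k n : ℕ) : k * F.nu (f ^ n) ≤ F.nu (f ^ (k * n)) := by
  rw [mul_comm k n, pow_mul]
  exact F.mul_nu_le_nu_pow _ k

theorem nubar_eq_iSup (f : R) : F.nubar f = ⨆ (n : ℕ) (_ : n > 0), F.nu (f ^ n) / n :=
  limsup_div_eq_iSup_of_superhomogeneous (F.mul_nu_pow_le_nu_pow_mul f)

theorem nubar_pow (f : R) {k : ℕ} (hk : k ≠ 0) : F.nubar (f ^ k) = k * F.nubar f := by
  simp only [nubar_eq_iSup, ← pow_mul]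
  exact iSup_comp_mul_div_of_superhomogeneous (F.mul_nu_pow_le_nu_pow_mul f) hk

theorem nubar_eq_iff_superlevel_eq (G : RingFiltration R) :
    (∀ f, F.nubar f = G.nubar f) ↔
      ∀ m : ℕ, {f : R | (m : ℝ≥0∞) ≤ F.nubar f} = {f : R | (m : ℝ≥0∞) ≤ G.nubar f} := by
  refine ⟨fun h m => by simp only [h], fun h f => ?_⟩
  have key : ∀ k m : ℕ, 0 < k → ((m : ℝ≥0∞) ≤ k * F.nubar f ↔ (m : ℝ≥0∞) ≤ k * G.nubar f) :=
    fun k m hk => by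
      simpa only [Set.mem_ofPred_eq, nubar_pow _ f hk.ne'] using Set.ext_iff.1 (h m) (f ^ k)
  exact le_antisymm (ENNReal.le_of_forall_natCast_le_mul fun k m hk => (key k m hk).1)
    (ENNReal.le_of_forall_natCast_le_mul fun k m hk => (key k m hk).2)

section Twist

variable {F} {FA : RingFiltration R} {α : ℝ}

theorem ofReal_mul_nu_twist_le (hα : 0 < α) (hFA : ∀ m : ℕ, FA.I m = F.I ⌈α * m⌉₊)
    (g : R) : ENNReal.ofReal α * FA.nu g ≤ F.nu g := by
  rw [nu, ENNReal.mul_sSup]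
  refine iSup₂_le ?_
  rintro _ ⟨m, hm, rfl⟩
  calc ENNReal.ofReal α * m = ENNReal.ofReal (α * m) := by
        rw [ENNReal.ofReal_mul hα.le, ENNReal.ofReal_natCast]
    _ ≤ (⌈α * m⌉₊ : ℝ≥0∞) := by
        rw [← ENNReal.ofReal_natCast]
        exact ENNReal.ofReal_le_ofReal (Nat.le_ceil _)
    _ ≤ F.nu g := F.le_nu (hFA m ▸ hm)

theorem nu_le_ofReal_mul_nu_twist_add_one (hα : 0 < α) (hFA : ∀ m : ℕ, FA.I m = F.I ⌈α * m⌉₊)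
    (g : R) : F.nu g ≤ ENNReal.ofReal α * (FA.nu g + 1) := by
  refine sSup_le ?_
  rintro _ ⟨m, hm, rfl⟩
  set j := ⌊m / α⌋₊
  have hj : α * j ≤ m := by
    have := Nat.floor_le (div_nonneg m.cast_nonneg hα.le)
    rwa [le_div_iff₀ hα, mul_comm] at this
  have hmem : g ∈ FA.I j := by
    rw [hFA]
    exact F.antitone_I (Nat.ceil_le.2 hj) hm
  calc (m : ℝ≥0∞) = ENNReal.ofReal m := (ENNReal.ofReal_natCast m).symm
    _ ≤ ENNReal.ofReal (α * (j + 1)) := by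
        refine ENNReal.ofReal_le_ofReal ?_
        have := Nat.lt_floor_add_one (m / α)
        rw [div_lt_iff₀ hα] at this
        linarith
    _ = ENNReal.ofReal α * (j + 1) := by
        rw [ENNReal.ofReal_mul hα.le, ← Nat.cast_add_one, ENNReal.ofReal_natCast, Nat.cast_add_one]
    _ ≤ ENNReal.ofReal α * (FA.nu g + 1) := by grw [FA.le_nu hmem]

theorem ofReal_mul_nubar_twist (hα : 0 < α) (hFA : ∀ m : ℕ, FA.I m = F.I ⌈α * m⌉₊)
    (f : R) : ENNReal.ofReal α * FA.nubar f = F.nubar f := by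
  apply le_antisymm
  · rw [nubar, nubar, ← ENNReal.limsup_const_mul_of_ne_top ENNReal.ofReal_ne_top]
    refine limsup_le_limsup (Eventually.of_forall fun n => ?_)
    dsimp only
    rw [← mul_div_assoc]
    grw [ofReal_mul_nu_twist_le hα hFA]
  · calc F.nubar f
        ≤ limsup (fun n : ℕ => ENNReal.ofReal α * (FA.nu (f ^ n) / n + (n : ℝ≥0∞)⁻¹)) atTop := by
          refine limsup_le_limsup (Eventually.of_forall fun n => ?_)
          dsimp only
          grw [nu_le_ofReal_mul_nu_twist_add_one hα hFA, mul_div_assoc, ENNReal.add_div, one_div]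
      _ = ENNReal.ofReal α *
            limsup (fun n : ℕ => FA.nu (f ^ n) / n + (n : ℝ≥0∞)⁻¹) atTop :=
          ENNReal.limsup_const_mul_of_ne_top ENNReal.ofReal_ne_top
      _ = ENNReal.ofReal α * FA.nubar f :=
          congrArg _ (ENNReal.limsup_add_of_right_tendsto_zero ENNReal.tendsto_inv_nat_nhds_zero _)

end Twist

end RingFiltration

theorem nubar_eq_iff_saturation_eq_general {R : Type*} [CommRing R]
    (F G FA : RingFiltration R) (α : ℝ) (hα : 0 < α)
    (hFA : ∀ m : ℕ, FA.I m = F.I ⌈α * m⌉₊) :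
    (∀ f, F.nubar f = ENNReal.ofReal α * G.nubar f) ↔
      (∀ m : ℕ, {f : R | (m : ℝ≥0∞) ≤ FA.nubar f} = {f : R | (m : ℝ≥0∞) ≤ G.nubar f}) := by
  have hα₀ : ENNReal.ofReal α ≠ 0 := (ENNReal.ofReal_pos.2 hα).ne'
  simp only [← RingFiltration.ofReal_mul_nubar_twist hα hFA,
    ENNReal.mul_right_inj hα₀ ENNReal.ofReal_ne_top]
  exact FA.nubar_eq_iff_superlevel_eq G

/-- For filtrations `I`, `J` of a Noetherian ring `R` and real `α > 0`:
`ν̄_I = α·ν̄_J` iff `K(I^(α)) = K(J)`, where `I^(α)_m = I_{⌈αm⌉}` and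
`K(F)_m = {f : ν̄_F(f) ≥ m}`. -/
theorem nubar_eq_iff_saturation_eq {R : Type*} [CommRing R] [IsNoetherianRing R]
    (F G FA : RingFiltration R) (α : ℝ) (hα : 0 < α)
    (hFA : ∀ m : ℕ, FA.I m = F.I ⌈α * m⌉₊) :
    (∀ f, F.nubar f = ENNReal.ofReal α * G.nubar f) ↔
      (∀ m : ℕ, {f : R | (m : ℝ≥0∞) ≤ FA.nubar f} = {f : R | (m : ℝ≥0∞) ≤ G.nubar f}) :=
  nubar_eq_iff_saturation_eq_general F G FA α hα hFA
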